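/- arXiv:2405.06456 — 2 statements merged into one kernel-verified Lean document; each statement's English description precedes it below -/
import Mathlib

section
/- Let Δ be a real number with |Δ| ≥ 15, let m, k be positive integers with k ≥ 2, and let y₁, ..., y_k be complex numbers with |y₁| ≥ exp(π√|Δ|) − 2079 and |y_i| ≤ (6/exp(π√|Δ|/2))·|y₁| for all i ≥ 2. Suppose further that (k−1) ≤ (1/π)·√|Δ|·(2 + log|Δ|) and 1 − (6√|Δ|(2 + log|Δ|))/(π·exp(π√|Δ|/2)) > 0. Then |y₁^m + y₂^m + ... + y_k^m| > 0; in particular y₁^m + ... + y_k^m ≠ 0. -/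
/-!
Split off the dominant term: each other term satisfies `‖yᵢ^m‖ ≤ c ‖y₁^m‖` with
`c = 6 / exp (π √|Δ| / 2)`, and the hypotheses on `k` say exactly that `(k - 1) c < 1`,
so the triangle inequality leaves `‖∑ yᵢ^m‖ ≥ (1 - (k - 1) c) ‖y₁‖^m`. This is positive
because `‖y₁‖ ≥ exp (π √15) - 2079 > 0`.
-/

open Real Complex Finset

theorem Finset.norm_sum_pos_of_norm_sum_erase_lt {ι E : Type*} [DecidableEq ι]
    [SeminormedAddCommGroup E] {s : Finset ι} {f : ι → E} {i : ι} (hi : i ∈ s)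
    (h : ∑ j ∈ s.erase i, ‖f j‖ < ‖f i‖) : 0 < ‖∑ j ∈ s, f j‖ := by
  rw [← add_sum_erase s f hi]
  calc 0 < ‖f i‖ - ∑ j ∈ s.erase i, ‖f j‖ := sub_pos.mpr h
    _ ≤ ‖f i‖ - ‖∑ j ∈ s.erase i, f j‖ := by gcongr; exact norm_sum_le _ _
    _ ≤ ‖f i + ∑ j ∈ s.erase i, f j‖ := by
      simpa using norm_sub_norm_le (f i) (-∑ j ∈ s.erase i, f j)

theorem norm_pow_le_mul_norm_pow_of_norm_le {𝕜 : Type*} [NormedDivisionRing 𝕜] {a b : 𝕜}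
    {c : ℝ} (hc0 : 0 ≤ c) (hc1 : c ≤ 1) {m : ℕ} (hm : 1 ≤ m) (hab : ‖b‖ ≤ c * ‖a‖) :
    ‖b ^ m‖ ≤ c * ‖a ^ m‖ := by
  rw [norm_pow, norm_pow]
  calc ‖b‖ ^ m ≤ (c * ‖a‖) ^ m := by gcongr
    _ = c ^ m * ‖a‖ ^ m := mul_pow _ _ _
    _ ≤ c * ‖a‖ ^ m := by gcongr; exact pow_le_of_le_one hc0 hc1 (by omega)

theorem Finset.norm_sum_pow_pos_of_dominant {ι 𝕜 : Type*} [DecidableEq ι]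
    [NormedDivisionRing 𝕜] {s : Finset ι} {y : ι → 𝕜} {i : ι} (hi : i ∈ s) (hyi : y i ≠ 0)
    {c : ℝ} (hc0 : 0 ≤ c) (hc1 : c ≤ 1) (hcard : ((#s : ℝ) - 1) * c < 1)
    (hy : ∀ j ∈ s, j ≠ i → ‖y j‖ ≤ c * ‖y i‖) {m : ℕ} (hm : 1 ≤ m) :
    0 < ‖∑ j ∈ s, y j ^ m‖ := by
  refine norm_sum_pos_of_norm_sum_erase_lt hi ?_
  have hpos : 0 < ‖y i ^ m‖ := norm_pos_iff.mpr (pow_ne_zero m hyi)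
  calc ∑ j ∈ s.erase i, ‖y j ^ m‖ ≤ ∑ j ∈ s.erase i, c * ‖y i ^ m‖ :=
        sum_le_sum fun j hj => norm_pow_le_mul_norm_pow_of_norm_le hc0 hc1 hm
          (hy j (mem_of_mem_erase hj) (ne_of_mem_erase hj))
    _ = ((#s : ℝ) - 1) * c * ‖y i ^ m‖ := by
      rw [sum_const, nsmul_eq_mul, cast_card_erase_of_mem hi, mul_assoc]
    _ < ‖y i ^ m‖ := by nlinarith

theorem two_thousand_seventy_nine_lt_exp_pi_mul_sqrt {x : ℝ} (hx : 15 ≤ x) :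
    2079 < Real.exp (π * √x) := by
  have hsqrt : 3 ≤ √x := Real.le_sqrt_of_sq_le (by linarith)
  have h9 : 9 ≤ π * √x := by nlinarith [pi_gt_three]
  calc (2079 : ℝ) < 2.7 ^ 9 := by norm_num
    _ ≤ Real.exp 1 ^ 9 := by gcongr; linarith [exp_one_gt_d9]
    _ = Real.exp 9 := by rw [← Real.exp_nat_mul]; norm_num
    _ ≤ Real.exp (π * √x) := exp_le_exp.mpr h9

theorem power_sum_nonzero (Δ : ℝ) (hΔ : 15 ≤ |Δ|) (m k : ℕ) (hm : 1 ≤ m)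
    (hk : 2 ≤ k) (y : Fin k → ℂ)
    (hy0 : Real.exp (Real.pi * Real.sqrt |Δ|) - 2079 ≤ ‖y ⟨0, by omega⟩‖)
    (hyi : ∀ i : Fin k, i ≠ ⟨0, by omega⟩ →
      ‖y i‖ ≤ (6 / Real.exp (Real.pi * Real.sqrt |Δ| / 2)) *
        ‖y ⟨0, by omega⟩‖)
    (hcard : ((k : ℝ) - 1) ≤ (1 / Real.pi) * Real.sqrt |Δ| * (2 + Real.log |Δ|))
    (hpos : 0 < 1 - 6 * Real.sqrt |Δ| * (2 + Real.log |Δ|) /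
      (Real.pi * Real.exp (Real.pi * Real.sqrt |Δ| / 2))) :
    0 < ‖∑ i, y i ^ m‖ ∧ (∑ i, y i ^ m) ≠ 0 := by
  set c : ℝ := 6 / Real.exp (π * √|Δ| / 2)
  have hc0 : 0 ≤ c := by positivity
  have hkc : ((k : ℝ) - 1) * c < 1 :=
    calc ((k : ℝ) - 1) * c ≤ 1 / π * √|Δ| * (2 + Real.log |Δ|) * c := by gcongr
      _ = 6 * √|Δ| * (2 + Real.log |Δ|) / (π * Real.exp (π * √|Δ| / 2)) := by
        simp only [c]; field_simp
      _ < 1 := by linarith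
  have hc1 : c ≤ 1 := by
    have : (2 : ℝ) ≤ k := by exact_mod_cast hk
    nlinarith
  have hy0_ne : y ⟨0, by omega⟩ ≠ 0 := by
    have := two_thousand_seventy_nine_lt_exp_pi_mul_sqrt hΔ
    exact norm_pos_iff.mp (by linarith)
  have hsum : 0 < ‖∑ i, y i ^ m‖ :=
    norm_sum_pow_pos_of_dominant (mem_univ _) hy0_ne hc0 hc1 (by simpa using hkc)
      (fun j _ hj => hyi j hj) hm
  exact ⟨hsum, norm_pos_iff.mp hsum⟩
end

section
/- Let n ≥ 1, let Δ be a real number with |Δ| ≥ 3, and let m be a positive integer. Let x_{i,j} (1 ≤ i ≤ n, 1 ≤ j ≤ n+1) be complex numbers and let τ ∈ S_{n+1} be the cycle with τ(i+1) = i for 1 ≤ i ≤ n and τ(1) = n+1. Suppose: (i) |x_{i,τ(i+1)}| = R for all i, where R ≥ 1; (ii) for every σ ∈ S_{n+1} with σ ≠ τ, the product |x_{1,σ(2)} ⋯ x_{n,σ(n+1)}| ≤ (6/exp(π√|Δ|/2))·R^n; and (iii) Σ_{σ ∈ S_{n+1}} sgn(σ)·(x_{1,σ(2)} ⋯ x_{n,σ(n+1)})^m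 = 0. Then (exp(π√|Δ|/2)/6)^m ≤ (n+1)!. -/
open Real Finset Equiv

theorem norm_le_sum_norm_erase_of_sum_eq_zero {ι E : Type*} [SeminormedAddCommGroup E]
    [DecidableEq ι] {s : Finset ι} {f : ι → E} (hsum : ∑ i ∈ s, f i = 0) {a : ι} (ha : a ∈ s) :
    ‖f a‖ ≤ ∑ i ∈ s.erase a, ‖f i‖ := by
  have hfa : f a = -∑ i ∈ s.erase a, f i := by
    rw [eq_neg_iff_add_eq_zero, add_sum_erase s f ha, hsum]
  rw [hfa, norm_neg]
  exact norm_sum_le _ _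

theorem norm_le_card_mul_of_sum_eq_zero {ι E : Type*} [Fintype ι] [SeminormedAddCommGroup E]
    {f : ι → E} (hsum : ∑ i, f i = 0) (a : ι) {B : ℝ} (hB0 : 0 ≤ B)
    (hB : ∀ i, i ≠ a → ‖f i‖ ≤ B) :
    ‖f a‖ ≤ Fintype.card ι * B := by
  classical
  calc ‖f a‖ ≤ ∑ i ∈ univ.erase a, ‖f i‖ :=
        norm_le_sum_norm_erase_of_sum_eq_zero hsum (mem_univ a)
    _ ≤ ∑ _i ∈ univ.erase a, B := sum_le_sum fun i hi => hB i (ne_of_mem_erase hi)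
    _ = #(univ.erase a) * B := by rw [sum_const, nsmul_eq_mul]
    _ ≤ Fintype.card ι * B := by
        gcongr
        exact card_le_univ _

theorem norm_intCast_units {𝕜 : Type*} [NormedDivisionRing 𝕜] (u : ℤˣ) :
    ‖((u : ℤ) : 𝕜)‖ = 1 := by
  rcases Int.units_eq_one_or u with rfl | rfl <;> simp

theorem inv_pow_le_card_of_signed_sum_pow_eq_zero {ι 𝕜 : Type*} [Fintype ι]
    [NormedDivisionRing 𝕜] (ε : ι → ℤˣ) (P : ι → 𝕜) (m : ℕ)
    (hsum : ∑ i, ((ε i : ℤ) : 𝕜) * P i ^ m = 0) (a : ι) {D c : ℝ} (hD : 0 < D) (hc : 0 < c)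
    (ha : ‖P a‖ = D) (hothers : ∀ i, i ≠ a → ‖P i‖ ≤ c * D) :
    c⁻¹ ^ m ≤ Fintype.card ι := by
  have hnorm : ∀ i, ‖((ε i : ℤ) : 𝕜) * P i ^ m‖ = ‖P i‖ ^ m := fun i => by
    rw [norm_mul, norm_intCast_units, one_mul, norm_pow]
  have hbound : D ^ m ≤ Fintype.card ι * (c ^ m * D ^ m) := by
    have := norm_le_card_mul_of_sum_eq_zero hsum a (B := (c * D) ^ m) (by positivity)
      fun i hi => by
        rw [hnorm]
        exact pow_le_pow_left₀ (norm_nonneg _) (hothers i hi) m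
    rwa [hnorm, ha, mul_pow] at this
  rw [← mul_assoc, le_mul_iff_one_le_left (pow_pos hD m)] at hbound
  rwa [inv_pow, inv_le_iff_one_le_mul₀ (pow_pos hc m)]

theorem determinant_dominant_bound_general (n : ℕ) (Δ : ℝ)
    (m : ℕ) (x : Fin n → Fin (n + 1) → ℂ)
    (τ : Equiv.Perm (Fin (n + 1)))
    (R : ℝ) (hR : 1 ≤ R)
    (hdom : ∀ i : Fin n, ‖x i (τ i.succ)‖ = R)
    (hoth : ∀ σ : Equiv.Perm (Fin (n + 1)), σ ≠ τ →
      ‖∏ i : Fin n, x i (σ i.succ)‖ ≤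
        (6 / Real.exp (Real.pi * Real.sqrt |Δ| / 2)) * R ^ n)
    (hvanish : ∑ σ : Equiv.Perm (Fin (n + 1)),
      ((Equiv.Perm.sign σ : ℤ) : ℂ) * (∏ i : Fin n, x i (σ i.succ)) ^ m = 0) :
    (Real.exp (Real.pi * Real.sqrt |Δ| / 2) / 6) ^ m ≤ (Nat.factorial (n + 1) : ℝ) := by
  have hτ : ‖∏ i : Fin n, x i (τ i.succ)‖ = R ^ n := by simp [norm_prod, hdom]
  have key := inv_pow_le_card_of_signed_sum_pow_eq_zero Perm.sign
    (fun σ => ∏ i : Fin n, x i (σ i.succ)) m hvanish τ (by positivity) (by positivity) hτ hoth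
  rwa [inv_div, Fintype.card_perm, Fintype.card_fin] at key

theorem determinant_dominant_bound (n : ℕ) (hn : 1 ≤ n) (Δ : ℝ) (hΔ : 3 ≤ |Δ|)
    (m : ℕ) (hm : 1 ≤ m) (x : Fin n → Fin (n + 1) → ℂ)
    (τ : Equiv.Perm (Fin (n + 1)))
    (hτ : ∀ i : Fin n, τ i.succ = i.castSucc) (hτ0 : τ 0 = Fin.last n)
    (R : ℝ) (hR : 1 ≤ R)
    (hdom : ∀ i : Fin n, ‖x i (τ i.succ)‖ = R)
    (hoth : ∀ σ : Equiv.Perm (Fin (n + 1)), σ ≠ τ →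
      ‖∏ i : Fin n, x i (σ i.succ)‖ ≤
        (6 / Real.exp (Real.pi * Real.sqrt |Δ| / 2)) * R ^ n)
    (hvanish : ∑ σ : Equiv.Perm (Fin (n + 1)),
      ((Equiv.Perm.sign σ : ℤ) : ℂ) * (∏ i : Fin n, x i (σ i.succ)) ^ m = 0) :
    (Real.exp (Real.pi * Real.sqrt |Δ| / 2) / 6) ^ m ≤ (Nat.factorial (n + 1) : ℝ) :=
  determinant_dominant_bound_general n Δ m x τ R hR hdom hoth hvanish
end
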